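/- Resonance lower bound for almost antipodal frequencies: Let 0 < c < 1. Let ξ₁, ξ₂ ∈ ℝ³ be nonzero, ξ := ξ₁ + ξ₂, τ₁, τ₂ ∈ ℝ, τ := τ₁ + τ₂, and let N₀, N₁, N₂ ≥ 1 satisfy N₀ ≤ 2|ξ|, |ξ₁| ≤ 2N₁ and |ξ₂| ≤ 2N₂. Suppose M₁ ≥ 2⁵(1−c)^{−1/2}(N₁N₂)^{1/2}/N₀ and 0 ≤ π − ∠(ξ₁,ξ₂) ≤ π/M₁. Then for either sign ±: max(⟨τ ± c|ξ|⟩, ⟨τ₁ − |ξ₁|⟩, ⟨τ₂ + |ξ₂|⟩) ≥ ((1−c)/12)|ξ|. -/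

import Mathlib

noncomputable section

open MeasureTheory Real ENNReal
open scoped NNReal


abbrev Sp3 := EuclideanSpace ℝ (Fin 3)

/-- Japanese bracket `⟨r⟩ = (1 + r²)^{1/2}`. -/
def jb (r : ℝ) : ℝ := Real.sqrt (1 + r ^ 2)

/-- Space-time Fourier transform on `ℝ³ × ℝ`. -/
def ftST (u : Sp3 × ℝ → ℂ) (p : Sp3 × ℝ) : ℂ :=
  ∫ q : Sp3 × ℝ, Complex.exp (-Complex.I * (((inner ℝ q.1 p.1 : ℝ) + q.2 * p.2 : ℝ) : ℂ)) * u q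

/-- Inverse space-time Fourier transform on `ℝ³ × ℝ`. -/
def ftSTinv (u : Sp3 × ℝ → ℂ) (q : Sp3 × ℝ) : ℂ :=
  (((2 * Real.pi) ^ (4 : ℕ) : ℝ) : ℂ)⁻¹ *
    ∫ p : Sp3 × ℝ, Complex.exp (Complex.I * (((inner ℝ q.1 p.1 : ℝ) + q.2 * p.2 : ℝ) : ℂ)) * u p

/-- `X^{s,b}`-type norm with sign `σ` and propagation speed `c` (wave case: `c = 1`). -/
def Xnorm (σ c s b : ℝ) (u : Sp3 × ℝ → ℂ) : ℝ≥0∞ :=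
  (∫⁻ p : Sp3 × ℝ,
      ENNReal.ofReal
        (jb ‖p.1‖ ^ (2 * s) * jb (p.2 + σ * c * ‖p.1‖) ^ (2 * b) * ‖ftST u p‖ ^ 2)) ^ (1 / 2 : ℝ)

/-- Dyadic frequency-modulation block `K^{σ,c}_{N,L}`. -/
def Kset (σ c N L : ℝ) : Set (Sp3 × ℝ) :=
  {p | N ≤ jb ‖p.1‖ ∧ jb ‖p.1‖ ≤ 2 * N ∧ L ≤ jb (p.2 + σ * c * ‖p.1‖) ∧
    jb (p.2 + σ * c * ‖p.1‖) ≤ 2 * L}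

/-- Space-time Fourier projection onto the set `K`. -/
def Pproj (K : Set (Sp3 × ℝ)) (u : Sp3 × ℝ → ℂ) : Sp3 × ℝ → ℂ :=
  ftSTinv (K.indicator (ftST u))

def IsDyadic (N : ℝ) : Prop := ∃ k : ℕ, N = 2 ^ k

/-- `Q_ω`: space-time frequencies whose spatial direction lies in `ω ⊆ S²`. -/
def Qcap (ω : Set Sp3) : Set (Sp3 × ℝ) := {p | p.1 ≠ 0 ∧ ‖p.1‖⁻¹ • p.1 ∈ ω}

/-- Angular separation of two subsets of the sphere. -/
def angSep (ω₁ ω₂ : Set Sp3) : ℝ :=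
  sInf {θ : ℝ | ∃ x ∈ ω₁, ∃ y ∈ ω₂, θ = InnerProductGeometry.angle x y}

/-- The trilinear convolution form `I(f,g₁,g₂)`. -/
def trI (f g₁ g₂ : Sp3 × ℝ → ℂ) : ℂ :=
  ∫ q : (Sp3 × ℝ) × (Sp3 × ℝ), f (q.1.1 + q.2.1, q.1.2 + q.2.2) * g₁ q.1 * g₂ q.2


/-!
If `ξ₁` and `ξ₂` are almost antipodal, `ξ₁ + ξ₂` is short compared with
`|ξ₁| - |ξ₂|`: the law of cosines with `1 + cos ∠(ξ₁, ξ₂) ≤ (π - ∠(ξ₁, ξ₂))² / 2` gives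
`|ξ|² ≤ (|ξ₁| - |ξ₂|)² + |ξ₁| |ξ₂| (π - ∠(ξ₁, ξ₂))²`, and the condition on `M₁` makes the last
term at most `π² (1 - c) |ξ|² / 64`, so `||ξ₁| - |ξ₂|| ≥ (1 - 3 (1 - c) / 4) |ξ|`.
The three modulations add up to `|ξ₁| - |ξ₂| ± c |ξ|`, whose size is therefore at least
`(1 - c) |ξ| / 4`, so one of them is at least a third of that.
-/

open InnerProductGeometry

section AlmostAntipodal

variable {E : Type*} [NormedAddCommGroup E] [InnerProductSpace ℝ E]

theorem norm_add_sq_le_sq_sub_add_mul_sq_pi_sub_angle (x y : E) :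
    ‖x + y‖ ^ 2 ≤ (‖x‖ - ‖y‖) ^ 2 + ‖x‖ * ‖y‖ * (π - angle x y) ^ 2 := by
  have hcos : 1 + Real.cos (angle x y) ≤ (π - angle x y) ^ 2 / 2 := by
    have := Real.one_sub_sq_div_two_le_cos (x := π - angle x y)
    rw [Real.cos_pi_sub] at this
    linarith
  have hxy : 0 ≤ ‖x‖ * ‖y‖ := by positivity
  rw [norm_add_sq_real, ← cos_angle_mul_norm_mul_norm]
  nlinarith [mul_le_mul_of_nonneg_left hcos hxy]

theorem mul_norm_add_le_abs_norm_sub_norm {κ : ℝ} (hκ0 : 0 ≤ κ) (hκ1 : κ ≤ 1) {x y : E}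
    (h : ‖x‖ * ‖y‖ * (π - angle x y) ^ 2 ≤ κ * ‖x + y‖ ^ 2) :
    (1 - κ) * ‖x + y‖ ≤ |‖x‖ - ‖y‖| := by
  have hsq : (1 - κ) * ‖x + y‖ ^ 2 ≤ (‖x‖ - ‖y‖) ^ 2 := by
    linarith [norm_add_sq_le_sq_sub_add_mul_sq_pi_sub_angle x y]
  refine (sq_le_sq₀ (by positivity) (abs_nonneg _)).1 ?_
  rw [sq_abs]
  calc ((1 - κ) * ‖x + y‖) ^ 2 = (1 - κ) * ((1 - κ) * ‖x + y‖ ^ 2) := by ring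
    _ ≤ 1 * ((1 - κ) * ‖x + y‖ ^ 2) := by
        gcongr
        linarith
    _ ≤ (‖x‖ - ‖y‖) ^ 2 := by linarith

end AlmostAntipodal

theorem mul_mul_sq_le_of_le_pi_div {c a b X φ N₀ N₁ N₂ M : ℝ} (hc : c < 1) (ha : 0 ≤ a)
    (hb : 0 ≤ b) (hN₀ : 0 < N₀) (haN : a ≤ 2 * N₁) (hbN : b ≤ 2 * N₂) (hX : N₀ ≤ 2 * X)
    (hM : 2 ^ 5 * (1 - c) ^ (-(1 / 2) : ℝ) * (N₁ * N₂) ^ (1 / 2 : ℝ) / N₀ ≤ M)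
    (hφ0 : 0 ≤ φ) (hφ : φ ≤ π / M) :
    a * b * φ ^ 2 ≤ π ^ 2 * (1 - c) / 64 * X ^ 2 := by
  set K := 2 ^ 5 * (1 - c) ^ (-(1 / 2) : ℝ) * (N₁ * N₂) ^ (1 / 2 : ℝ) / N₀ with hK_def
  have hc' : 0 < 1 - c := by linarith
  have hNN : 0 ≤ N₁ * N₂ := mul_nonneg (by linarith) (by linarith)
  have hK0 : 0 ≤ K := by positivity
  have hKsq : K ^ 2 * (1 - c) * N₀ ^ 2 = 1024 * (N₁ * N₂) := by
    rw [hK_def, Real.rpow_neg hc'.le, ← Real.sqrt_eq_rpow, ← Real.sqrt_eq_rpow, div_pow,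
      mul_pow, mul_pow, inv_pow, Real.sq_sqrt hc'.le, Real.sq_sqrt hNN]
    field_simp
    ring
  have hKφ : K * φ ≤ π :=
    calc K * φ ≤ φ * M := by rw [mul_comm]; gcongr
      _ ≤ π := mul_le_of_le_div₀ Real.pi_pos.le (hK0.trans hM) hφ
  have hab : a * b ≤ 4 * (N₁ * N₂) := by nlinarith [mul_le_mul haN hbN hb (by linarith)]
  calc a * b * φ ^ 2 ≤ 4 * (N₁ * N₂) * φ ^ 2 := by gcongr
    _ = (K * φ) ^ 2 * (1 - c) * N₀ ^ 2 / 256 := by linear_combination (-(φ ^ 2) / 256) * hKsq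
    _ ≤ π ^ 2 * (1 - c) * N₀ ^ 2 / 256 := by gcongr
    _ ≤ π ^ 2 * (1 - c) * (4 * X ^ 2) / 256 := by
        gcongr
        nlinarith
    _ = π ^ 2 * (1 - c) / 64 * X ^ 2 := by ring

theorem abs_le_jb (r : ℝ) : |r| ≤ jb r := by
  rw [jb, ← Real.sqrt_sq_eq_abs]
  exact Real.sqrt_le_sqrt (by linarith)

theorem abs_sub_sub_le_three_mul_max_jb (u v w : ℝ) :
    |u - v - w| ≤ 3 * max (jb u) (max (jb v) (jb w)) := by
  have hu := (abs_le_jb u).trans (le_max_left (jb u) (max (jb v) (jb w)))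
  have hv := ((abs_le_jb v).trans (le_max_left _ (jb w))).trans (le_max_right (jb u) _)
  have hw := ((abs_le_jb w).trans (le_max_right (jb v) _)).trans (le_max_right (jb u) _)
  calc |u - v - w| ≤ |u| + |v| + |w| := (abs_sub _ _).trans (by linarith [abs_sub u v])
    _ ≤ _ := by linarith

theorem resonance_almost_antipodal_general (c : ℝ) (hc0 : 0 < c) (hc1 : c < 1)
    (ξ₁ ξ₂ : Sp3) (τ₁ τ₂ : ℝ) (N₀ N₁ N₂ M₁ : ℝ)
    (hN₀ : 1 ≤ N₀)
    (hξ : N₀ ≤ 2 * ‖ξ₁ + ξ₂‖) (hξ₁N : ‖ξ₁‖ ≤ 2 * N₁) (hξ₂N : ‖ξ₂‖ ≤ 2 * N₂)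
    (hM₁ : 2 ^ 5 * (1 - c) ^ (-(1 / 2) : ℝ) * (N₁ * N₂) ^ (1 / 2 : ℝ) / N₀ ≤ M₁)
    (hang : Real.pi - InnerProductGeometry.angle ξ₁ ξ₂ ≤ Real.pi / M₁)
    (σ : ℝ) (hσ : σ = 1 ∨ σ = -1) :
    (1 - c) / 12 * ‖ξ₁ + ξ₂‖ ≤
      max (jb (τ₁ + τ₂ + σ * c * ‖ξ₁ + ξ₂‖))
        (max (jb (τ₁ - ‖ξ₁‖)) (jb (τ₂ + ‖ξ₂‖))) := by
  set X := ‖ξ₁ + ξ₂‖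
  have hκ : π ^ 2 * (1 - c) / 64 ≤ 3 * (1 - c) / 4 := by
    have hπ : π ^ 2 ≤ 48 := by nlinarith [Real.pi_lt_four, Real.pi_pos]
    nlinarith
  have hsmall := mul_mul_sq_le_of_le_pi_div hc1 (norm_nonneg ξ₁) (norm_nonneg ξ₂)
    (by linarith) hξ₁N hξ₂N hξ hM₁ (sub_nonneg.2 (angle_le_pi ξ₁ ξ₂)) hang
  have hfar := mul_norm_add_le_abs_norm_sub_norm (by positivity) (by linarith) hsmall
  have hres := abs_sub_sub_le_three_mul_max_jb (τ₁ + τ₂ + σ * c * X) (τ₁ - ‖ξ₁‖) (τ₂ + ‖ξ₂‖)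
  have hσc : |σ * c * X| = c * X := by
    rcases hσ with rfl | rfl <;> simp [abs_mul, abs_of_pos hc0, X]
  have hdiff : |‖ξ₁‖ - ‖ξ₂‖| ≤
      |τ₁ + τ₂ + σ * c * X - (τ₁ - ‖ξ₁‖) - (τ₂ + ‖ξ₂‖)| + |σ * c * X| := by
    have e : ‖ξ₁‖ - ‖ξ₂‖ = τ₁ + τ₂ + σ * c * X - (τ₁ - ‖ξ₁‖) - (τ₂ + ‖ξ₂‖) - σ * c * X := by
      ring
    rw [e]
    exact abs_sub _ _
  have hκX := mul_le_mul_of_nonneg_right hκ (norm_nonneg (ξ₁ + ξ₂))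
  linarith

/-- Resonance lower bound for almost antipodal frequencies (Proposition 3.6). -/
theorem resonance_almost_antipodal (c : ℝ) (hc0 : 0 < c) (hc1 : c < 1)
    (ξ₁ ξ₂ : Sp3) (hξ₁ : ξ₁ ≠ 0) (hξ₂ : ξ₂ ≠ 0) (τ₁ τ₂ : ℝ) (N₀ N₁ N₂ M₁ : ℝ)
    (hN₀ : 1 ≤ N₀) (hN₁ : 1 ≤ N₁) (hN₂ : 1 ≤ N₂)
    (hξ : N₀ ≤ 2 * ‖ξ₁ + ξ₂‖) (hξ₁N : ‖ξ₁‖ ≤ 2 * N₁) (hξ₂N : ‖ξ₂‖ ≤ 2 * N₂)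
    (hM₁ : 2 ^ 5 * (1 - c) ^ (-(1 / 2) : ℝ) * (N₁ * N₂) ^ (1 / 2 : ℝ) / N₀ ≤ M₁)
    (hang : Real.pi - InnerProductGeometry.angle ξ₁ ξ₂ ≤ Real.pi / M₁)
    (σ : ℝ) (hσ : σ = 1 ∨ σ = -1) :
    (1 - c) / 12 * ‖ξ₁ + ξ₂‖ ≤
      max (jb (τ₁ + τ₂ + σ * c * ‖ξ₁ + ξ₂‖))
        (max (jb (τ₁ - ‖ξ₁‖)) (jb (τ₂ + ‖ξ₂‖))) :=
  resonance_almost_antipodal_general c hc0 hc1 ξ₁ ξ₂ τ₁ τ₂ N₀ N₁ N₂ M₁ hN₀ hξ hξ₁N hξ₂N hM₁ hang σ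
    hσ
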